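/- arXiv:1702.01345 — 5 statements merged into one kernel-verified Lean document; each statement's English description precedes it below -/
import Mathlib

section
/- Let R be a commutative ring and A a commutative R-algebra. Then f-dim_R(A) ≤ dim(A) ≤ f-dim_R(A) + (1 + f-dim_R(A)) · dim_e^A(R), where dim denotes Krull dimension. -/
open TensorProduct

noncomputable section

/-- The residue field `κ(p)` of a commutative ring `R` at a prime ideal `p`, realised as the
residue field of the localization of `R` at `p`; it is an `R`-algebra. -/
abbrev Kappa (R : Type*) [CommRing R] (p : Ideal R) [p.IsPrime] : Type _ :=
  IsLocalRing.ResidueField (Localization.AtPrime p)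

/-- The fibre ring `κ(p) ⊗_R A` of an `R`-algebra `A` at a prime ideal `p` of `R`. -/
abbrev FiberRing (R A : Type*) [CommRing R] [CommRing A] [Algebra R A]
    (p : Ideal R) [p.IsPrime] : Type _ :=
  (Kappa R p) ⊗[R] A

/-- A prime `p` of `R` is *effective* with respect to the `R`-algebra `A` if the fibre ring
`κ(p) ⊗_R A` is nonzero. -/
def IsEffective (R A : Type*) [CommRing R] [CommRing A] [Algebra R A]
    (p : PrimeSpectrum R) : Prop :=
  Nontrivial (FiberRing R A p.asIdeal)

/-- `dim_p(A) := dim (κ(p) ⊗_R A)`, the Krull dimension of the fibre ring of `A` at `p`. -/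
def fiberDim (R A : Type*) [CommRing R] [CommRing A] [Algebra R A]
    (p : Ideal R) [p.IsPrime] : WithBot ℕ∞ :=
  ringKrullDim (FiberRing R A p)

/-- `f-dim_R(A) := sup {dim_p(A) : p ∈ Spec_e^A(R)}`, the fibre Krull dimension of `A` over `R`. -/
def fdim (R A : Type*) [CommRing R] [CommRing A] [Algebra R A] : WithBot ℕ∞ :=
  ⨆ p : {p : PrimeSpectrum R // IsEffective R A p}, fiberDim R A p.1.asIdeal

/-- `dim_e^A(R)`, the effective Krull dimension of `R` with respect to `A`: the supremum of
lengths of chains of primes of `R` consisting of effective primes with respect to `A`. -/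
def edim (R A : Type*) [CommRing R] [CommRing A] [Algebra R A] : WithBot ℕ∞ :=
  Order.krullDim {p : PrimeSpectrum R // IsEffective R A p}

/-- A ring homomorphism `f : R → A` satisfies the Going-Down property if for any primes
`p ⊆ q` of `R` and any prime `Q` of `A` with `f⁻¹(Q) = q` there is a prime `P ⊆ Q` of `A`
with `f⁻¹(P) = p`. -/
def SatisfiesGoingDown {R A : Type*} [CommRing R] [CommRing A] (f : R →+* A) : Prop :=
  ∀ p q : Ideal R, p.IsPrime → q.IsPrime → p ≤ q →
    ∀ Q : Ideal A, Q.IsPrime → Q.comap f = q →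
      ∃ P : Ideal A, P.IsPrime ∧ P ≤ Q ∧ P.comap f = p

/-- The transcendence degree (as an extended natural number) of an algebra `L` over `K`:
the supremum of the cardinalities of finite algebraically independent subsets of `L`. -/
def algTrdeg (K L : Type*) [CommRing K] [CommRing L] [Algebra K L] : ℕ∞ :=
  ⨆ s : {s : Finset L // AlgebraicIndependent K (Subtype.val : {x : L // x ∈ s} → L)},
    (s.1.card : ℕ∞)

/-- Transcendence degree along a ring homomorphism. -/
def rhTrdeg {K L : Type*} [CommRing K] [CommRing L] (f : K →+* L) : ℕ∞ :=
  @algTrdeg K L _ _ f.toAlgebra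

/-- `t.d.(C : k)`: the supremum, over the primes `q` of `C`, of the transcendence degree of
`Frac(C/q)` over `k`. -/
def tdRing (k C : Type*) [CommRing k] [CommRing C] [Algebra k C] : ℕ∞ :=
  ⨆ q : PrimeSpectrum C, algTrdeg k (FractionRing (C ⧸ q.asIdeal))

/-- `t.d._p(C : R) := t.d.(κ(p) ⊗_R C : κ(p))`, the transcendence degree of `C` over `R`
at the prime `p`. -/
def tdLocal (R C : Type*) [CommRing R] [CommRing C] [Algebra R C]
    (p : Ideal R) [p.IsPrime] : ℕ∞ :=
  tdRing (Kappa R p) (FiberRing R C p)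

/-- `Spec_p(A)`: the primes of `A` contracting to `p` over `R`. -/
abbrev SpecAt (R A : Type*) [CommRing R] [CommRing A] [Algebra R A] (p : Ideal R) : Type _ :=
  {P : PrimeSpectrum A // P.asIdeal.comap (algebraMap R A) = p}

/-- `ht_p(P)`: the supremum of lengths of chains of primes of `A` contracting to `p`
and ending at `P`. -/
def htLocal (R : Type*) {A : Type*} [CommRing R] [CommRing A] [Algebra R A] {p : Ideal R}
    (P : SpecAt R A p) : ℕ∞ :=
  Order.height P

/-- A `k`-algebra `C` over a field `k` is an AF-ring if
`ht(Q) + t.d.(C/Q : k) = t.d.(C_Q : k)` for every prime `Q` of `C`. -/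
def IsAFRing (k C : Type*) [Field k] [CommRing C] [Algebra k C] : Prop :=
  ∀ Q : PrimeSpectrum C,
    Order.height Q + tdRing k (C ⧸ Q.asIdeal) = tdRing k (Localization.AtPrime Q.asIdeal)

/-- `A` is a fibred AF-ring at a prime `p` of `R`: the fibre ring `κ(p) ⊗_R A` is nonzero
and is an AF-ring over `κ(p)`. -/
def IsFibredAFRingAt (R A : Type*) [CommRing R] [CommRing A] [Algebra R A]
    (p : PrimeSpectrum R) : Prop :=
  Nontrivial (FiberRing R A p.asIdeal) ∧
    IsAFRing (Kappa R p.asIdeal) (FiberRing R A p.asIdeal)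

/-- `A` is a fibred AF-ring over `R`: every nonzero fibre ring `κ(p) ⊗_R A` is an AF-ring
over `κ(p)`. -/
def IsFibredAFRing (R A : Type*) [CommRing R] [CommRing A] [Algebra R A] : Prop :=
  ∀ p : PrimeSpectrum R, Nontrivial (FiberRing R A p.asIdeal) →
    IsAFRing (Kappa R p.asIdeal) (FiberRing R A p.asIdeal)

/-- The extension `Q[n] = Q·C[X₁,…,Xₙ]` of a prime `Q` of `C` to the polynomial ring
in `n` indeterminates; it is again prime. -/
def polyExt {C : Type*} [CommRing C] (n : ℕ) (Q : PrimeSpectrum C) :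
    PrimeSpectrum (MvPolynomial (Fin n) C) :=
  ⟨Q.asIdeal.map MvPolynomial.C, by
    have h : RingHom.ker (MvPolynomial.map (σ := Fin n) (Ideal.Quotient.mk Q.asIdeal)) =
        Q.asIdeal.map MvPolynomial.C := by
      rw [MvPolynomial.ker_map, Ideal.mk_ker]
    rw [← h]
    exact RingHom.ker_isPrime _⟩

/-- `ht(Q[s])` for `s : ℕ∞`: for finite `s = n` it is the height of `Q[n]`, and for
`s = ⊤` it is the supremum over all finite `n` of the heights of the `Q[n]`. -/
def polyExtHeight {C : Type*} [CommRing C] (Q : PrimeSpectrum C) (s : ℕ∞) : ℕ∞ :=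
  WithTop.recTopCoe (⨆ n : ℕ, Order.height (polyExt n Q))
    (fun n => Order.height (polyExt n Q)) s

/-- Wadsworth's invariant
`D(s, d, C) := sup {ht(Q[s]) + min(s, d + t.d.(C/Q : k)) : Q ∈ Spec C}`. -/
def Dinv (k C : Type*) [Field k] [CommRing C] [Algebra k C] (s d : ℕ∞) : ℕ∞ :=
  ⨆ Q : PrimeSpectrum C, polyExtHeight Q s + min s (d + tdRing k (C ⧸ Q.asIdeal))

/-- `D_p(s, d, B) := D(s, d, κ(p) ⊗_R B)`. -/
def DLocal (R B : Type*) [CommRing R] [CommRing B] [Algebra R B]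
    (p : Ideal R) [p.IsPrime] (s d : ℕ∞) : ℕ∞ :=
  Dinv (Kappa R p) (FiberRing R B p) s d


/-- The Krull dimension of a commutative ring, as an element of `WithBot ℕ∞`
(definitionally equal to `ringKrullDim`). -/
def ringDim (A : Type*) [CommRing A] : WithBot ℕ∞ :=
  ringKrullDim A

/-! The primes of `A` lying over a prime `p` of `R` form a poset isomorphic to
`Spec (κ(p) ⊗_R A)`, which gives the first inequality. For the second, contract a chain of
primes of `A` to `R`: the contractions form a chain of effective primes, so they take at most
`1 + dim_e^A(R)` distinct values, and the members of the chain over each value form a chain in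
a single fibre, so there are at most `1 + f-dim_R(A)` of them. -/

-- `Order.krullDim_le_of_krullDim_preimage_le`, with the bound `m` on the fibres allowed to be `⊤`.
theorem Order.krullDim_le_add_mul_of_krullDim_preimage_le {α β : Type*} [Preorder α]
    [PartialOrder β] (f : α →o β) {m : WithBot ℕ∞} (h : ∀ y, krullDim (f ⁻¹' {y}) ≤ m) :
    krullDim α ≤ m + (1 + m) * krullDim β := by
  rcases isEmpty_or_nonempty α with _ | ⟨⟨x⟩⟩
  · simp [krullDim_eq_bot]
  have hm : 0 ≤ m := (krullDim_nonneg_iff.mpr ⟨⟨x, rfl⟩⟩).trans (h (f x))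
  lift m to ℕ∞ using ne_bot_of_le_ne_bot (by simp) hm
  induction m using ENat.recTopCoe with
  | top =>
    have hβ : 0 ≤ krullDim β := krullDim_nonneg_iff.mpr ⟨f x⟩
    lift krullDim β to ℕ∞ using ne_bot_of_le_ne_bot (by simp) hβ with k
    norm_cast
    simp
  | coe n =>
    calc krullDim α ≤ (n + 1) * krullDim β + n :=
          krullDim_le_of_krullDim_preimage_le f (by exact_mod_cast h)
      _ = _ := by simp only [WithBot.coe_natCast]; ring

section

open PrimeSpectrum

variable {R A : Type*} [CommRing R] [CommRing A] [Algebra R A]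

theorem krullDim_preimage_comap_eq_fiberDim (p : PrimeSpectrum R) :
    Order.krullDim (comap (algebraMap R A) ⁻¹' {p}) = fiberDim R A p.asIdeal :=
  Order.krullDim_eq_of_orderIso (preimageOrderIsoFiber R A p)

theorem fiberDim_le_ringDim (p : PrimeSpectrum R) : fiberDim R A p.asIdeal ≤ ringDim A := by
  rw [← krullDim_preimage_comap_eq_fiberDim]
  exact Order.krullDim_le_of_strictMono _ (Subtype.strictMono_coe _)

theorem isEffective_comap (P : PrimeSpectrum A) : IsEffective R A (comap (algebraMap R A) P) :=
  nonempty_iff_nontrivial.mp ⟨preimageOrderIsoFiber R A _ ⟨P, rfl⟩⟩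

theorem fdim_le_ringDim : fdim R A ≤ ringDim A :=
  iSup_le fun p => fiberDim_le_ringDim p.1

variable (R A) in
def effectiveComap : PrimeSpectrum A →o {p // IsEffective R A p} where
  toFun P := ⟨comap (algebraMap R A) P, isEffective_comap P⟩
  monotone' _ _ h := Ideal.comap_mono h

theorem ringDim_le_fdim_add_mul_edim : ringDim A ≤ fdim R A + (1 + fdim R A) * edim R A := by
  refine Order.krullDim_le_add_mul_of_krullDim_preimage_le (effectiveComap R A) fun p => ?_
  have hfibre : effectiveComap R A ⁻¹' {p} = comap (algebraMap R A) ⁻¹' {p.1} :=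
    Set.ext fun _ => Subtype.ext_iff
  rw [hfibre, krullDim_preimage_comap_eq_fiberDim]
  exact le_iSup (fun p : {p // IsEffective R A p} => fiberDim R A p.1.asIdeal) p

end

/-- For a commutative ring `R` and a commutative `R`-algebra `A`,
`f-dim_R(A) ≤ dim A ≤ f-dim_R(A) + (1 + f-dim_R(A)) · dim_e^A(R)`. -/
theorem stmt_0 (R A : Type*) [CommRing R] [CommRing A] [Algebra R A] :
    fdim R A ≤ ringDim A ∧
      ringDim A ≤ fdim R A + (1 + fdim R A) * edim R A :=
  ⟨fdim_le_ringDim, ringDim_le_fdim_add_mul_edim⟩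

end
end

section
/- Let R be a commutative ring and A a commutative R-algebra such that the structure map f_A : R → A satisfies the Going-Down property. Then sup{ht(p) + dim_p(A) : p ∈ Spec_e^A(R)} ≤ dim(A), where ht(p) is the height of p in R and dim denotes Krull dimension. -/
open TensorProduct

noncomputable section

/-!
Going-down makes `Spec A → Spec R` non-decreasing on heights: every prime `Q` of `A` over `p`
has `ht p ≤ ht Q`. The primes of `A` over `p` form a poset isomorphic to `Spec (κ(p) ⊗_R A)`,
so a chain of length `n` in the fibre starts at some `Q` of height `≥ ht p` and therefore ends
at a prime of height `≥ ht p + n`.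
-/

namespace Order

variable {α : Type*} [Preorder α]

lemma height_head_add_length_le_height_last (p : LTSeries α) :
    height p.head + p.length ≤ height p.last := by
  have : Nonempty {q : LTSeries α // q.last = p.head} := ⟨⟨RelSeries.singleton _ p.head, rfl⟩⟩
  rw [height_eq_iSup_last_eq, iSup_subtype', ENat.iSup_add]
  refine iSup_le fun q => ?_
  have h := length_le_height_last (p := q.1.smash p q.2)
  rw [RelSeries.last_smash] at h
  exact_mod_cast h

lemma coe_add_krullDim_le_of_le_height (s : Set α) (n : ℕ∞) (h : ∀ x ∈ s, n ≤ height x) :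
    (n : WithBot ℕ∞) + krullDim s ≤ krullDim α := by
  rcases isEmpty_or_nonempty s with hs | hs
  · simp [krullDim_eq_bot]
  have : Nonempty α := hs.map Subtype.val
  rw [krullDim_eq_iSup_length, krullDim_eq_iSup_height_of_nonempty, ← WithBot.coe_add,
    WithBot.coe_le_coe, ENat.add_iSup]
  refine iSup_le fun c => ?_
  let c' := c.map Subtype.val (Subtype.strictMono_coe _)
  calc n + c.length ≤ height c'.head + c'.length := add_le_add_left (h _ c.head.2) _
    _ ≤ height c'.last := height_head_add_length_le_height_last c'
    _ ≤ ⨆ a, height a := le_iSup height _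

end Order

lemma SatisfiesGoingDown.hasGoingDown {R A : Type*} [CommRing R] [CommRing A] [Algebra R A]
    (h : SatisfiesGoingDown (algebraMap R A)) : Algebra.HasGoingDown R A where
  exists_ideal_le_liesOver_of_lt {p} _ Q _ hlt := by
    obtain ⟨P, hP, hPQ, hPp⟩ := h p _ ‹_› inferInstance hlt.le Q ‹_› rfl
    exact ⟨P, hPQ, hP, ⟨hPp.symm⟩⟩

lemma PrimeSpectrum.height_comap_le_of_hasGoingDown {R A : Type*} [CommRing R] [CommRing A]
    [Algebra R A] [Algebra.HasGoingDown R A] (Q : PrimeSpectrum A) :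
    Order.height (PrimeSpectrum.comap (algebraMap R A) Q) ≤ Order.height Q := by
  refine Order.height_le fun l hl => ?_
  have : Q.asIdeal.LiesOver l.last.asIdeal := ⟨by rw [hl]; rfl⟩
  obtain ⟨L, hlen, hlast, -⟩ := Ideal.exists_ltSeries_of_hasGoingDown l Q.asIdeal
  rw [← hlen]
  exact Order.length_le_height hlast.le

/-- If the structure map `R → A` satisfies Going-Down, then
`sup {ht(p) + dim_p(A) : p ∈ Spec_e^A(R)} ≤ dim A`. -/
theorem stmt_1 (R A : Type*) [CommRing R] [CommRing A] [Algebra R A]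
    (hGD : SatisfiesGoingDown (algebraMap R A)) :
    ⨆ p : {p : PrimeSpectrum R // IsEffective R A p},
        ((Order.height p.1 : ℕ∞) : WithBot ℕ∞) + fiberDim R A p.1.asIdeal ≤
      ringKrullDim A := by
  have := hGD.hasGoingDown
  refine iSup_le fun ⟨p, _⟩ => ?_
  rw [fiberDim, ringKrullDim,
    ← Order.krullDim_eq_of_orderIso (PrimeSpectrum.preimageOrderIsoFiber R A p)]
  refine Order.coe_add_krullDim_le_of_le_height _ _ fun Q hQ => ?_
  rw [Set.mem_preimage, Set.mem_singleton_iff] at hQ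
  exact hQ ▸ PrimeSpectrum.height_comap_le_of_hasGoingDown Q
end
end

section
/- Let R be a commutative ring, A and B commutative R-algebras, I a prime ideal of A, and J a prime ideal of B. Then there exists a prime ideal P of A ⊗_R B with P ∩ A = I and P ∩ B = J if and only if I ∩ R = J ∩ R. -/
open TensorProduct

noncomputable section

/-- Auxiliary: given compatible ring maps from `A` and `B` into a ring `S`, any prime of `S`
pulls back to a prime of `A ⊗[R] B` whose contractions to `A` and `B` are the pullbacks. -/
lemma stmt7_aux {R A B S : Type*} [CommRing R] [CommRing A] [CommRing B] [CommRing S]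
    [Algebra R A] [Algebra R B] (f : A →+* S) (g : B →+* S)
    (hfg : f.comp (algebraMap R A) = g.comp (algebraMap R B))
    (Q : Ideal S) (hQ : Q.IsPrime) :
    ∃ P : Ideal (A ⊗[R] B), P.IsPrime ∧
      P.comap (Algebra.TensorProduct.includeLeftRingHom (R := R) (A := A) (B := B)) = Q.comap f ∧
      P.comap (Algebra.TensorProduct.includeRight (R := R) (A := A) (B := B)).toRingHom
        = Q.comap g := by
  letI : Algebra R S := (f.comp (algebraMap R A)).toAlgebra
  let φA : A →ₐ[R] S := { toRingHom := f, commutes' := fun r => rfl }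
  let φB : B →ₐ[R] S :=
    { toRingHom := g, commutes' := fun r =>
        show g ((algebraMap R B) r) = f ((algebraMap R A) r) from (RingHom.congr_fun hfg r).symm }
  let φ : A ⊗[R] B →ₐ[R] S := Algebra.TensorProduct.productMap φA φB
  refine ⟨Q.comap φ.toRingHom, Ideal.comap_isPrime _ Q, ?_, ?_⟩
  · rw [Ideal.comap_comap]
    congr 1
    ext a
    exact Algebra.TensorProduct.productMap_left_apply φA φB a
  · rw [Ideal.comap_comap]
    congr 1
    ext b
    exact Algebra.TensorProduct.productMap_right_apply φA φB b

set_option maxHeartbeats 2000000 in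
set_option synthInstance.maxHeartbeats 400000 in
/-- There is a prime `P` of `A ⊗_R B` with `P ∩ A = I` and `P ∩ B = J`
if and only if `I ∩ R = J ∩ R`. -/
theorem stmt_7 (R A B : Type*) [CommRing R] [CommRing A] [CommRing B]
    [Algebra R A] [Algebra R B] (I : Ideal A) [I.IsPrime] (J : Ideal B) [J.IsPrime] :
    (∃ P : Ideal (A ⊗[R] B), P.IsPrime ∧
        P.comap (Algebra.TensorProduct.includeLeftRingHom (R := R) (A := A) (B := B)) = I ∧
        P.comap (Algebra.TensorProduct.includeRight (R := R) (A := A) (B := B)).toRingHom = J) ↔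
      I.comap (algebraMap R A) = J.comap (algebraMap R B) := by
  constructor
  · rintro ⟨P, hP, rfl, rfl⟩
    rw [Ideal.comap_comap, Ideal.comap_comap,
      Algebra.TensorProduct.includeLeftRingHom_comp_algebraMap]
  · intro h
    set p : Ideal R := I.comap (algebraMap R A) with hp
    haveI : p.IsPrime := Ideal.comap_isPrime _ I
    letI k := FractionRing (R ⧸ p)
    letI K := FractionRing (A ⧸ I)
    letI L := FractionRing (B ⧸ J)
    have hle : p ≤ I.comap (algebraMap R A) := le_rfl
    have hle' : p ≤ J.comap (algebraMap R B) := h.le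
    let qA : R ⧸ p →+* A ⧸ I := Ideal.quotientMap I (algebraMap R A) hle
    let qB : R ⧸ p →+* B ⧸ J := Ideal.quotientMap J (algebraMap R B) hle'
    have hqA : Function.Injective qA := Ideal.quotientMap_injective' le_rfl
    have hqB : Function.Injective qB := Ideal.quotientMap_injective' h.ge
    let fK : R ⧸ p →+* K := (algebraMap (A ⧸ I) K).comp qA
    let fL : R ⧸ p →+* L := (algebraMap (B ⧸ J) L).comp qB
    have hfK : Function.Injective fK :=
      (IsFractionRing.injective (A ⧸ I) K).comp hqA
    have hfL : Function.Injective fL :=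
      (IsFractionRing.injective (B ⧸ J) L).comp hqB
    letI : Algebra k K := (IsFractionRing.lift (g := fK) hfK).toAlgebra
    letI : Algebra k L := (IsFractionRing.lift (g := fL) hfL).toAlgebra
    haveI : Nontrivial (K ⊗[k] L) := inferInstance
    let ψA : A →+* K := (algebraMap (A ⧸ I) K).comp (Ideal.Quotient.mk I)
    let ψB : B →+* L := (algebraMap (B ⧸ J) L).comp (Ideal.Quotient.mk J)
    let f : A →+* K ⊗[k] L :=
      (Algebra.TensorProduct.includeLeftRingHom (R := k) (A := K) (B := L)).comp ψA
    let g : B →+* K ⊗[k] L :=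
      (Algebra.TensorProduct.includeRight (R := k) (A := K) (B := L)).toRingHom.comp ψB
    have hfg : f.comp (algebraMap R A) = g.comp (algebraMap R B) := by
      ext r
      have h1 : ψA (algebraMap R A r) = algebraMap k K (algebraMap (R ⧸ p) k
          (Ideal.Quotient.mk p r)) := by
        rw [show (algebraMap k K : k →+* K) = IsFractionRing.lift (g := fK) hfK from rfl,
          IsFractionRing.lift_algebraMap]
        show (algebraMap (A ⧸ I) K) (Ideal.Quotient.mk I (algebraMap R A r)) =
          (algebraMap (A ⧸ I) K) (qA (Ideal.Quotient.mk p r))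
        rw [Ideal.quotientMap_mk]
      have h2 : ψB (algebraMap R B r) = algebraMap k L (algebraMap (R ⧸ p) k
          (Ideal.Quotient.mk p r)) := by
        rw [show (algebraMap k L : k →+* L) = IsFractionRing.lift (g := fL) hfL from rfl,
          IsFractionRing.lift_algebraMap]
        show (algebraMap (B ⧸ J) L) (Ideal.Quotient.mk J (algebraMap R B r)) =
          (algebraMap (B ⧸ J) L) (qB (Ideal.Quotient.mk p r))
        rw [Ideal.quotientMap_mk]
      show Algebra.TensorProduct.includeLeftRingHom (ψA (algebraMap R A r)) =
        Algebra.TensorProduct.includeRight (ψB (algebraMap R B r))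
      rw [h1, h2]
      exact congrFun (congrArg DFunLike.coe
        (Algebra.TensorProduct.includeLeftRingHom_comp_algebraMap (R := k) (A := K) (B := L)))
        (algebraMap (R ⧸ p) k (Ideal.Quotient.mk p r))
    obtain ⟨Q, hQmax⟩ := Ideal.exists_maximal (K ⊗[k] L)
    obtain ⟨P, hP, h1, h2⟩ := stmt7_aux f g hfg Q hQmax.isPrime
    refine ⟨P, hP, ?_, ?_⟩
    · rw [h1]
      show Ideal.comap ((Algebra.TensorProduct.includeLeftRingHom (R := k)).comp ψA) Q = I
      rw [← Ideal.comap_comap]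
      haveI : (Ideal.comap (Algebra.TensorProduct.includeLeftRingHom
          (R := k) (A := K) (B := L)) Q).IsPrime := Ideal.comap_isPrime _ Q
      rw [Ideal.eq_bot_of_prime (Ideal.comap (Algebra.TensorProduct.includeLeftRingHom
          (R := k) (A := K) (B := L)) Q)]
      show RingHom.ker ψA = I
      rw [show ψA = (algebraMap (A ⧸ I) K).comp (Ideal.Quotient.mk I) from rfl,
        ← RingHom.comap_ker,
        (RingHom.injective_iff_ker_eq_bot _).mp (IsFractionRing.injective (A ⧸ I) K),
        ← RingHom.ker_eq_comap_bot]
      exact Ideal.mk_ker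
    · rw [h2]
      show Ideal.comap ((Algebra.TensorProduct.includeRight (R := k) (A := K)
        (B := L)).toRingHom.comp ψB) Q = J
      rw [← Ideal.comap_comap]
      haveI : (Ideal.comap (Algebra.TensorProduct.includeRight
          (R := k) (A := K) (B := L)).toRingHom Q).IsPrime := Ideal.comap_isPrime _ Q
      rw [Ideal.eq_bot_of_prime (Ideal.comap (Algebra.TensorProduct.includeRight
          (R := k) (A := K) (B := L)).toRingHom Q)]
      show RingHom.ker ψB = J
      rw [show ψB = (algebraMap (B ⧸ J) L).comp (Ideal.Quotient.mk J) from rfl,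
        ← RingHom.comap_ker,
        (RingHom.injective_iff_ker_eq_bot _).mp (IsFractionRing.injective (B ⧸ J) L),
        ← RingHom.ker_eq_comap_bot]
      exact Ideal.mk_ker
end
end

section
/- Let R be a commutative ring and A, B commutative R-algebras. The following are equivalent: (1) A ⊗_R B ≠ 0; (2) Spec_e^A(R) ∩ Spec_e^B(R) ≠ ∅; (3) there exist a prime ideal I of A and a prime ideal J of B such that I ∩ R = J ∩ R. -/
open TensorProduct

noncomputable section

/-! A prime `p` of `R` is effective for `A` exactly when it is the contraction of a prime of `A`,
which gives (2) ⇔ (3). A prime of `A ⊗_R B` contracts to primes of `A` and of `B` lying over the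
same prime of `R`, which gives (1) ⇒ (2). Conversely, for `κ = κ(p)` one has
`κ ⊗_R (A ⊗_R B) ≃ (κ ⊗_R A) ⊗_κ (κ ⊗_R B)`, a tensor product of two nonzero vector spaces over
a field, hence nonzero. -/

section

variable {R A B : Type*} [CommRing R] [CommRing A] [CommRing B] [Algebra R A] [Algebra R B]

theorem isEffective_iff_exists_comap_eq (p : PrimeSpectrum R) :
    IsEffective R A p ↔ ∃ I : PrimeSpectrum A, I.asIdeal.comap (algebraMap R A) = p.asIdeal :=
  (PrimeSpectrum.nontrivial_iff_mem_rangeComap p).trans <| exists_congr fun _ ↦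
    PrimeSpectrum.ext_iff

theorem exists_isEffective_of_nontrivial_tensorProduct [Nontrivial (A ⊗[R] B)] :
    ∃ p : PrimeSpectrum R, IsEffective R A p ∧ IsEffective R B p := by
  obtain ⟨Q⟩ : Nonempty (PrimeSpectrum (A ⊗[R] B)) := inferInstance
  refine ⟨⟨Q.asIdeal.comap (algebraMap R (A ⊗[R] B)), inferInstance⟩,
    (isEffective_iff_exists_comap_eq _).mpr
      ⟨⟨Q.asIdeal.comap (Algebra.TensorProduct.includeLeft (S := R)), inferInstance⟩, ?_⟩,
    (isEffective_iff_exists_comap_eq _).mpr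
      ⟨⟨Q.asIdeal.comap Algebra.TensorProduct.includeRight, inferInstance⟩, ?_⟩⟩ <;>
  ext <;> simp

theorem nontrivial_tensorProduct_of_isEffective {p : PrimeSpectrum R}
    (hA : IsEffective R A p) (hB : IsEffective R B p) : Nontrivial (A ⊗[R] B) := by
  let κ := Kappa R p.asIdeal
  have : Nontrivial (κ ⊗[R] A) := hA
  have : Nontrivial (κ ⊗[R] B) := hB
  have : Nontrivial ((κ ⊗[R] A) ⊗[κ] (κ ⊗[R] B)) :=
    Module.FaithfullyFlat.rTensor_nontrivial κ (κ ⊗[R] B) (κ ⊗[R] A)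
  have : Nontrivial (κ ⊗[R] (A ⊗[R] B)) :=
    ((AlgebraTensorModule.cancelBaseChange R κ κ (κ ⊗[R] A) B).toEquiv.trans
      (TensorProduct.assoc R κ A B).toEquiv).symm.nontrivial
  exact (Algebra.TensorProduct.includeRight (R := R) (A := κ)).toRingHom.domain_nontrivial

end

/-- The following are equivalent: `A ⊗_R B ≠ 0`;
`Spec_e^A(R) ∩ Spec_e^B(R) ≠ ∅`; there are primes `I` of `A` and `J` of `B` with
`I ∩ R = J ∩ R`. -/
theorem stmt_9 (R A B : Type*) [CommRing R] [CommRing A] [CommRing B]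
    [Algebra R A] [Algebra R B] :
    (Nontrivial (A ⊗[R] B) ↔
        ∃ p : PrimeSpectrum R, IsEffective R A p ∧ IsEffective R B p) ∧
      ((∃ p : PrimeSpectrum R, IsEffective R A p ∧ IsEffective R B p) ↔
        ∃ (I : PrimeSpectrum A) (J : PrimeSpectrum B),
          I.asIdeal.comap (algebraMap R A) = J.asIdeal.comap (algebraMap R B)) := by
  refine ⟨⟨fun _ ↦ exists_isEffective_of_nontrivial_tensorProduct,
    fun ⟨_, hA, hB⟩ ↦ nontrivial_tensorProduct_of_isEffective hA hB⟩, ⟨?_, ?_⟩⟩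
  · rintro ⟨p, hA, hB⟩
    obtain ⟨I, hI⟩ := (isEffective_iff_exists_comap_eq p).mp hA
    obtain ⟨J, hJ⟩ := (isEffective_iff_exists_comap_eq p).mp hB
    exact ⟨I, J, hI.trans hJ.symm⟩
  · rintro ⟨I, J, hIJ⟩
    exact ⟨⟨_, I.isPrime.comap _⟩, (isEffective_iff_exists_comap_eq _).mpr ⟨I, rfl⟩,
      (isEffective_iff_exists_comap_eq _).mpr ⟨J, hIJ.symm⟩⟩

end
end

section
/- Let A and B be commutative rings such that A ⊗_ℤ B ≠ 0 and A is a Boolean ring. Then dim(A ⊗_ℤ B) = dim(B/2B), where dim denotes Krull dimension. -/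
open TensorProduct

noncomputable section

section BooleanTensorAux

set_option maxHeartbeats 1000000
set_option synthInstance.maxHeartbeats 200000

variable {A B : Type*} [CommRing A] [CommRing B]

lemma bool_two_eq_zero (hBool : ∀ a : A, a * a = a) : (2 : A) = 0 := by
  linear_combination hBool 2

lemma bool_one_sub_mem (hBool : ∀ a : A, a * a = a) (p : Ideal A) [hp : p.IsPrime]
    {a : A} (ha : a ∉ p) : 1 - a ∈ p := by
  have h0 : a * (1 - a) ∈ p := by
    have : a * (1 - a) = 0 := by linear_combination -(hBool a)
    rw [this]; exact p.zero_mem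
  rcases hp.mem_or_mem h0 with h | h
  · exact absurd h ha
  · exact h

lemma bool_prime_eq (hBool : ∀ a : A, a * a = a) (p q : Ideal A) [p.IsPrime] [hq : q.IsPrime]
    (h : p ≤ q) : p = q := by
  refine le_antisymm h fun a haq => ?_
  by_contra hap
  have h1 : (1 : A) ∈ q := by
    have := h (bool_one_sub_mem hBool p hap)
    have h2 := q.add_mem this haq
    simpa using h2
  exact hq.ne_top ((Ideal.eq_top_iff_one q).mpr h1)

open Classical in
/-- The characteristic function of a prime ideal of a Boolean ring, as a ring hom to any
ring in which `2 = 0`. -/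
def boolCharHom (hBool : ∀ a : A, a * a = a) (p : Ideal A) [hp : p.IsPrime]
    (C : Type*) [CommRing C] (h2 : (2 : C) = 0) : A →+* C where
  toFun a := if a ∈ p then 0 else 1
  map_one' := by
    rw [if_neg]
    intro h
    exact hp.ne_top ((Ideal.eq_top_iff_one p).mpr h)
  map_zero' := if_pos p.zero_mem
  map_mul' a b := by
    by_cases ha : a ∈ p
    · rw [if_pos ha, if_pos (Ideal.mul_mem_right b p ha), zero_mul]
    · by_cases hb : b ∈ p
      · rw [if_pos hb, if_neg ha, if_pos (Ideal.mul_mem_left p a hb), one_mul]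
      · rw [if_neg ha, if_neg hb, if_neg, one_mul]
        intro hab
        rcases hp.mem_or_mem hab with h | h
        · exact ha h
        · exact hb h
  map_add' a b := by
    by_cases ha : a ∈ p
    · by_cases hb : b ∈ p
      · rw [if_pos ha, if_pos hb, if_pos (p.add_mem ha hb), zero_add]
      · have hab : a + b ∉ p := fun h => hb (by simpa using p.sub_mem h ha)
        rw [if_pos ha, if_neg hb, if_neg hab, zero_add]
    · by_cases hb : b ∈ p
      · have hab : a + b ∉ p := fun h => ha (by simpa using p.sub_mem h hb)
        rw [if_neg ha, if_pos hb, if_neg hab, add_zero]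
      · have hsum : a + b ∈ p := by
          have h1 := bool_one_sub_mem hBool p ha
          have h2 := bool_one_sub_mem hBool p hb
          have h3 := p.add_mem h1 h2
          have h4 : (1 - a) + (1 - b) = 2 - (a + b) := by ring
          rw [h4, bool_two_eq_zero hBool] at h3
          simpa using p.neg_mem h3
        rw [if_neg ha, if_neg hb, if_pos hsum, ← h2]
        norm_num

@[simp] lemma boolCharHom_of_mem (hBool : ∀ a : A, a * a = a) (p : Ideal A) [p.IsPrime]
    {C : Type*} [CommRing C] (h2 : (2 : C) = 0) {a : A} (ha : a ∈ p) :
    boolCharHom hBool p C h2 a = 0 := by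
  simp [boolCharHom, ha]

@[simp] lemma boolCharHom_of_notMem (hBool : ∀ a : A, a * a = a) (p : Ideal A) [p.IsPrime]
    {C : Type*} [CommRing C] (h2 : (2 : C) = 0) {a : A} (ha : a ∉ p) :
    boolCharHom hBool p C h2 a = 1 := by
  simp [boolCharHom, ha]

lemma quot_two_eq_zero : (2 : B ⧸ Ideal.span {(2 : B)}) = 0 := by
  have h : (Ideal.Quotient.mk (Ideal.span {(2 : B)})) (2 : B) = 0 :=
    Ideal.Quotient.eq_zero_iff_mem.mpr (Ideal.mem_span_singleton_self 2)
  rw [← map_ofNat (Ideal.Quotient.mk (Ideal.span {(2 : B)})) 2]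
  exact h

/-- The projection `A ⊗ B → B/2B` determined by a prime `p` of the Boolean ring `A`. -/
def phiBool (hBool : ∀ a : A, a * a = a) (p : Ideal A) [p.IsPrime] :
    A ⊗[ℤ] B →+* B ⧸ Ideal.span {(2 : B)} :=
  (Algebra.TensorProduct.productMap
    ((boolCharHom hBool p _ quot_two_eq_zero).toIntAlgHom)
    ((Ideal.Quotient.mk (Ideal.span {(2 : B)})).toIntAlgHom)).toRingHom

lemma phiBool_tmul (hBool : ∀ a : A, a * a = a) (p : Ideal A) [p.IsPrime] (a : A) (b : B) :
    phiBool (B := B) hBool p (a ⊗ₜ[ℤ] b) =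
      boolCharHom hBool p _ quot_two_eq_zero a * Ideal.Quotient.mk _ b := rfl

lemma phiBool_congr (hBool : ∀ a : A, a * a = a) {p q : Ideal A} [p.IsPrime] [q.IsPrime]
    (e : p = q) : phiBool (B := B) hBool p = phiBool hBool q := by
  subst e; rfl

lemma phiBool_surjective (hBool : ∀ a : A, a * a = a) (p : Ideal A) [p.IsPrime] :
    Function.Surjective (phiBool (B := B) hBool p) := by
  intro c
  obtain ⟨b, rfl⟩ := Ideal.Quotient.mk_surjective c
  refine ⟨(1 : A) ⊗ₜ b, ?_⟩
  rw [phiBool_tmul, map_one, one_mul]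

lemma tmul_two_mul (hBool : ∀ a : A, a * a = a) (x : B) :
    ((1 : A) ⊗ₜ[ℤ] ((2 : B) * x) : A ⊗[ℤ] B) = 0 := by
  have h1 : (2 : B) * x = (2 : ℤ) • x := by rw [zsmul_eq_mul]; norm_num
  have h2 : (2 : ℤ) • (1 : A) = 2 := by rw [zsmul_eq_mul]; norm_num
  rw [h1, TensorProduct.tmul_smul, TensorProduct.smul_tmul', h2,
    bool_two_eq_zero hBool, TensorProduct.zero_tmul]

lemma ker_phiBool_le (hBool : ∀ a : A, a * a = a) (p : Ideal A) [p.IsPrime]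
    (P : Ideal (A ⊗[ℤ] B)) [P.IsPrime]
    (hmem : ∀ a : A, a ∈ p ↔ (a ⊗ₜ[ℤ] (1 : B) : A ⊗[ℤ] B) ∈ P) :
    RingHom.ker (phiBool (B := B) hBool p) ≤ P := by
  have hσ0 : ∀ b ∈ Ideal.span {(2 : B)}, ((Ideal.Quotient.mk P).comp
      (Algebra.TensorProduct.includeRight (R := ℤ) (A := A) (B := B)).toRingHom) b = 0 := by
    intro b hb
    obtain ⟨x, rfl⟩ := Ideal.mem_span_singleton'.mp hb
    have : ((1 : A) ⊗ₜ[ℤ] (x * 2) : A ⊗[ℤ] B) = 0 := by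
      rw [mul_comm]; exact tmul_two_mul hBool x
    simp only [RingHom.comp_apply, AlgHom.toRingHom_eq_coe, RingHom.coe_coe,
      Algebra.TensorProduct.includeRight_apply]
    rw [this, map_zero]
  set σ : (B ⧸ Ideal.span {(2 : B)}) →+* (A ⊗[ℤ] B) ⧸ P :=
    Ideal.Quotient.lift _ _ hσ0 with hσ
  have key : ∀ x : A ⊗[ℤ] B, σ (phiBool hBool p x) = Ideal.Quotient.mk P x := by
    intro x
    induction x using TensorProduct.induction_on with
    | zero => simp
    | add x y hx hy => rw [map_add, map_add, hx, hy, map_add]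
    | tmul a b =>
      rw [phiBool_tmul, map_mul]
      have hb : σ (Ideal.Quotient.mk _ b) =
          Ideal.Quotient.mk P ((1 : A) ⊗ₜ[ℤ] b) := by
        rw [hσ, Ideal.Quotient.lift_mk]
        simp
      have ha : σ (boolCharHom hBool p _ quot_two_eq_zero a) =
          Ideal.Quotient.mk P (a ⊗ₜ[ℤ] (1 : B)) := by
        by_cases hap : a ∈ p
        · rw [boolCharHom_of_mem hBool p _ hap, map_zero]
          exact (Ideal.Quotient.eq_zero_iff_mem.mpr ((hmem a).mp hap)).symm
        · rw [boolCharHom_of_notMem hBool p _ hap, map_one]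
          have hd : ((a - 1) ⊗ₜ[ℤ] (1 : B) : A ⊗[ℤ] B) ∈ P := by
            refine (hmem (a - 1)).mp ?_
            have := bool_one_sub_mem hBool p hap
            simpa using p.neg_mem this
          have hsplit : (a ⊗ₜ[ℤ] (1 : B) : A ⊗[ℤ] B) = 1 + (a - 1) ⊗ₜ[ℤ] (1 : B) := by
            rw [Algebra.TensorProduct.one_def, ← TensorProduct.add_tmul]
            norm_num
          rw [hsplit, map_add, Ideal.Quotient.eq_zero_iff_mem.mpr hd, add_zero, map_one]
      rw [ha, hb, ← map_mul, Algebra.TensorProduct.tmul_mul_tmul, one_mul, mul_one]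
  intro x hx
  have h0 : Ideal.Quotient.mk P x = 0 := by
    rw [← key x, RingHom.mem_ker.mp hx, map_zero]
  exact Ideal.Quotient.eq_zero_iff_mem.mp h0

/-- The fibre map on prime spectra induced by the projections `phiBool`. -/
def psiBool (hBool : ∀ a : A, a * a = a) (P : PrimeSpectrum (A ⊗[ℤ] B)) :
    PrimeSpectrum (B ⧸ Ideal.span {(2 : B)}) :=
  haveI : (P.asIdeal.comap (Algebra.TensorProduct.includeLeftRingHom
      (R := ℤ) (A := A) (B := B))).IsPrime := Ideal.IsPrime.comap _
  ⟨P.asIdeal.map (phiBool hBool (P.asIdeal.comap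
      (Algebra.TensorProduct.includeLeftRingHom (R := ℤ) (A := A) (B := B)))),
   Ideal.map_isPrime_of_surjective (phiBool_surjective hBool _)
     (ker_phiBool_le hBool _ P.asIdeal (fun _ => Iff.rfl))⟩

lemma psiBool_strictMono (hBool : ∀ a : A, a * a = a) :
    StrictMono (psiBool (B := B) hBool) := by
  intro P P' h
  have hle : P.asIdeal ≤ P'.asIdeal := (PrimeSpectrum.asIdeal_le_asIdeal _ _).mpr h.le
  set p := P.asIdeal.comap (Algebra.TensorProduct.includeLeftRingHom
      (R := ℤ) (A := A) (B := B)) with hpdef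
  set p' := P'.asIdeal.comap (Algebra.TensorProduct.includeLeftRingHom
      (R := ℤ) (A := A) (B := B)) with hp'def
  haveI : p.IsPrime := Ideal.IsPrime.comap _
  haveI : p'.IsPrime := Ideal.IsPrime.comap _
  have e : p = p' := bool_prime_eq hBool p p' (Ideal.comap_mono hle)
  have hker : RingHom.ker (phiBool (B := B) hBool p) ≤ P.asIdeal :=
    ker_phiBool_le hBool p P.asIdeal (fun _ => Iff.rfl)
  have hker' : RingHom.ker (phiBool (B := B) hBool p) ≤ P'.asIdeal := by
    rw [phiBool_congr hBool e]
    exact ker_phiBool_le hBool p' P'.asIdeal (fun _ => Iff.rfl)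
  rw [← PrimeSpectrum.asIdeal_lt_asIdeal]
  show P.asIdeal.map (phiBool hBool p) < P'.asIdeal.map (phiBool hBool p')
  rw [← phiBool_congr hBool e]
  refine lt_of_le_of_ne (Ideal.map_mono hle) fun heq => ?_
  have hc := congrArg (Ideal.comap (phiBool (B := B) hBool p)) heq
  rw [Ideal.comap_map_of_surjective (phiBool (B := B) hBool p) (phiBool_surjective hBool p),
      Ideal.comap_map_of_surjective (phiBool (B := B) hBool p) (phiBool_surjective hBool p),
      ← RingHom.ker_eq_comap_bot, sup_eq_left.mpr hker, sup_eq_left.mpr hker'] at hc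
  exact h.ne (PrimeSpectrum.ext hc)


end BooleanTensorAux

/-- If `A ⊗_ℤ B ≠ 0` and `A` is a Boolean ring, then
`dim (A ⊗_ℤ B) = dim (B/2B)`. -/
theorem stmt_19 (A B : Type*) [CommRing A] [CommRing B]
    (hT : Nontrivial (A ⊗[ℤ] B)) (hBool : ∀ a : A, a * a = a) :
    ringKrullDim (A ⊗[ℤ] B) = ringKrullDim (B ⧸ Ideal.span {(2 : B)}) := by
  classical
  have hA : Nontrivial A := by
    by_contra hcon
    rw [not_nontrivial_iff_subsingleton] at hcon
    have h1 : (1 : A) = 0 := Subsingleton.elim _ _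
    have h0 : (1 : A ⊗[ℤ] B) = 0 := by
      rw [Algebra.TensorProduct.one_def, h1, TensorProduct.zero_tmul]
    exact one_ne_zero h0
  obtain ⟨m, hm⟩ := Ideal.exists_maximal A
  haveI : m.IsPrime := hm.isPrime
  have le1 : ringKrullDim (B ⧸ Ideal.span {(2 : B)}) ≤ ringKrullDim (A ⊗[ℤ] B) :=
    ringKrullDim_le_of_surjective (phiBool hBool m) (phiBool_surjective hBool m)
  have le2 : ringKrullDim (A ⊗[ℤ] B) ≤ ringKrullDim (B ⧸ Ideal.span {(2 : B)}) :=
    Order.krullDim_le_of_strictMono (psiBool hBool) (psiBool_strictMono hBool)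
  exact le_antisymm le2 le1
end
end
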